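/- Let 2 ≤ m ≤ n be integers, let U ∈ ℂ^{n×n} be unitary with rows U_1,…,U_n, let θ_1,…,θ_n be i.i.d. Bernoulli(m/n) random variables, and set A_θ := √(n/m)·diag(θ_1,…,θ_n)·U. Let ξ ∈ ℂ^n be a fixed vector with ‖ξ‖₂ = 1 and set R := n·‖Uξ‖_∞². Then for every t with max(1, R) < t < n/m, ℙ{ |‖A_θ ξ‖₂² − 1| ≥ t } ≤ exp( −m·( (t/R)·log(t/R) − t/R + 1 ) ). -/

import Mathlib

open MeasureTheory ProbabilityTheory
open scoped ENNReal Matrix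

/-- The Euclidean (ℓ²) norm of a finite complex vector. -/
noncomputable def l2C {n : ℕ} (x : Fin n → ℂ) : ℝ := Real.sqrt (∑ i, ‖x i‖ ^ 2)

/-- The ℓ^∞ norm of a finite complex vector. -/
noncomputable def linfC {n : ℕ} (x : Fin n → ℂ) : ℝ := ⨆ i, ‖x i‖

/-- The subsampled isometry realized as the `n×n` random matrix
`A_θ := √(n/m)·diag(θ)·U`, which has the same action (in ℓ² norm) as the matrix
obtained by keeping the rows of `√(n/m)·U` indexed by `{j : θ_j = 1}`. -/
noncomputable def subIso {n : ℕ} (m : ℕ) (U : Matrix (Fin n) (Fin n) ℂ) (θ : Fin n → Bool) :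
    Matrix (Fin n) (Fin n) ℂ :=
  (Real.sqrt ((n : ℝ) / m) : ℂ) • (Matrix.diagonal (fun i => if θ i then (1 : ℂ) else 0) * U)

/-! With `a i = ‖(U ξ) i‖²`, unitarity gives `∑ a i = 1`, the definition of `R` gives
`n a i ≤ R`, and `‖A_θ ξ‖² = (n/m) ∑ θ_i a_i ≥ 0`; since `t > 1` the event can only happen
through the upper tail. In terms of the weights `x i = n a i / R ∈ [0,1]`, whose
Bernoulli(m/n)-sum has mean `m/R`, the event says `∑ θ_i x_i ≥ (1+t)·m/R`. The multiplicative
Chernoff bound (exponential Markov at `λ = log(1+t)`, with `e^{λx} ≤ 1 + x(e^λ - 1)` on `[0,1]`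
by convexity) bounds its probability by `exp(-(m/R)·h(1+t))`, where `h u = u log u - u + 1`,
and `R·h(t/R) ≤ h(1+t)` whenever `1 ≤ R ≤ t`. -/

open Real Finset

/-- The Cramér rate function of the Poisson law; the paper's exponent is
`m * poissonRate (t / R)`. -/
noncomputable def poissonRate (u : ℝ) : ℝ := u * log u - u + 1

lemma mul_log_div_add_le_mul_log_add_one {R t : ℝ} (hR : 1 ≤ R) (hRt : R ≤ t) :
    t * log (t / R) + R ≤ t * log t + 1 := by
  have hR0 : 0 < R := by linarith
  have hRlog : R - 1 ≤ R * log R := by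
    have h := mul_le_mul_of_nonneg_left (one_sub_inv_le_log_of_pos hR0) hR0.le
    rwa [mul_sub, mul_one, mul_inv_cancel₀ hR0.ne'] at h
  have hlog : R * log R ≤ t * log R := mul_le_mul_of_nonneg_right hRt (log_nonneg hR)
  rw [log_div (by linarith) hR0.ne']
  linarith

lemma mul_log_add_one_le_one_add_mul_log_one_add {t : ℝ} (ht : 1 ≤ t) :
    t * log t + 1 ≤ (1 + t) * log (1 + t) := by
  have ht0 : 0 < t := by linarith
  have hratio : 1 / (1 + t) ≤ log (1 + t) - log t := by
    have := one_sub_inv_le_log_of_pos (x := (1 + t) / t) (by positivity)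
    rw [log_div (by linarith) ht0.ne', inv_div] at this
    convert this using 1
    field_simp
    ring
  have hlog2 : 1 / 2 ≤ log (1 + t) := calc
    1 / 2 ≤ log 2 := by linarith [log_two_gt_d9]
    _ ≤ log (1 + t) := log_le_log two_pos (by linarith)
  have hfrac : 1 / 2 ≤ t * (1 / (1 + t)) := by
    rw [mul_one_div, le_div_iff₀ (by linarith)]
    linarith
  -- `(1 + t) log (1 + t) - t log t = log (1 + t) + t (log (1 + t) - log t) ≥ 1/2 + 1/2`
  nlinarith [mul_le_mul_of_nonneg_left hratio ht0.le]

lemma mul_poissonRate_div_le_poissonRate_one_add {R t : ℝ} (hR : 1 ≤ R) (hRt : R ≤ t) :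
    R * poissonRate (t / R) ≤ poissonRate (1 + t) := by
  have hR0 : R ≠ 0 := by positivity
  have key := (mul_log_div_add_le_mul_log_add_one hR hRt).trans
    (mul_log_add_one_le_one_add_mul_log_one_add (hR.trans hRt))
  have hscaled : R * poissonRate (t / R) = t * log (t / R) - t + R := by
    rw [poissonRate]
    field_simp
  rw [hscaled, poissonRate]
  linarith

section MultiplicativeChernoff

variable {Ω ι : Type*} [MeasurableSpace Ω] {μ : Measure Ω} [IsProbabilityMeasure μ]

lemma exp_mul_le_one_add_mul_exp_sub_one {x : ℝ} (hx : x ∈ Set.Icc 0 1) (l : ℝ) :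
    exp (l * x) ≤ 1 + x * (exp l - 1) := by
  have h := convexOn_exp.2 (Set.mem_univ 0) (Set.mem_univ l) (sub_nonneg.2 hx.2) hx.1
    (sub_add_cancel 1 x)
  simp only [smul_eq_mul, mul_zero, zero_add, exp_zero, mul_one] at h
  rw [mul_comm]
  linarith

lemma mgf_le_exp_integral_mul_exp_sub_one {X : Ω → ℝ} (hX : Measurable X)
    (h01 : ∀ ω, X ω ∈ Set.Icc 0 1) (l : ℝ) : mgf X μ l ≤ exp (μ[X] * (exp l - 1)) := by
  have hXint : Integrable X μ := .of_mem_Icc 0 1 hX.aemeasurable (ae_of_all _ h01)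
  calc mgf X μ l ≤ μ[fun ω => 1 + X ω * (exp l - 1)] :=
        integral_mono (integrable_exp_mul_of_mem_Icc hX.aemeasurable (ae_of_all _ h01))
          ((integrable_const 1).add (hXint.mul_const _))
          fun ω => exp_mul_le_one_add_mul_exp_sub_one (h01 ω) l
    _ = 1 + μ[X] * (exp l - 1) := by
        rw [integral_add (integrable_const 1) (hXint.mul_const _), integral_const,
          integral_mul_const]
        simp
    _ ≤ exp (μ[X] * (exp l - 1)) := by linarith [add_one_le_exp (μ[X] * (exp l - 1))]

theorem measure_sum_ge_le_exp_neg_mul_poissonRate [Fintype ι] {X : ι → Ω → ℝ}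
    (hindep : iIndepFun X μ) (hX : ∀ i, Measurable (X i)) (h01 : ∀ i ω, X i ω ∈ Set.Icc 0 1)
    {u : ℝ} (hu : 1 ≤ u) :
    μ.real {ω | u * ∑ i, μ[X i] ≤ ∑ i, X i ω} ≤
      exp (-((∑ i, μ[X i]) * poissonRate u)) := by
  set M := ∑ i, μ[X i] with hM
  have hsum_int : Integrable (fun ω => exp (log u * (∑ i, X i) ω)) μ :=
    integrable_exp_mul_of_mem_Icc (a := 0) (b := Fintype.card ι) (by fun_prop)
      (ae_of_all _ fun ω => by
        simp only [Finset.sum_apply]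
        refine ⟨sum_nonneg fun i _ => (h01 i ω).1, ?_⟩
        simpa using sum_le_sum fun i (_ : i ∈ univ) => (h01 i ω).2)
  have hu0 : 0 < u := by linarith
  calc μ.real {ω | u * M ≤ ∑ i, X i ω}
      = μ.real {ω | u * M ≤ (∑ i, X i) ω} := by simp only [Finset.sum_apply]
    _ ≤ exp (-log u * (u * M)) * ∏ i, mgf (X i) μ (log u) := by
        rw [← hindep.mgf_sum hX]
        exact measure_ge_le_exp_mul_mgf _ (log_nonneg hu) hsum_int
    _ ≤ exp (-log u * (u * M)) * ∏ i, exp (μ[X i] * (u - 1)) := by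
        gcongr with i
        · exact fun i _ => mgf_nonneg
        · simpa [exp_log hu0] using mgf_le_exp_integral_mul_exp_sub_one (hX i) (h01 i) (log u)
    _ = exp (-(M * poissonRate u)) := by
        rw [← exp_sum, ← exp_add, ← sum_mul, ← hM, poissonRate]
        congr 1
        ring

end MultiplicativeChernoff

section BernoulliProduct

variable {ι : Type*} [Fintype ι] {p : NNReal}

lemma integral_pi_bernoulli_ite (hp : p ≤ 1) (i : ι) (c : ℝ) :
    ∫ b, (if b i then c else 0) ∂(Measure.pi fun _ : ι => (PMF.bernoulli p hp).toMeasure) =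
      p * c := by
  refine (integral_comp_eval (μ := fun _ : ι => (PMF.bernoulli p hp).toMeasure)
    (f := fun b : Bool => if b then c else 0) measurable_from_top.aestronglyMeasurable).trans ?_
  rw [PMF.integral_eq_sum]
  simp [PMF.bernoulli_apply]

theorem measureReal_pi_bernoulli_sum_ite_ge_le (hp : p ≤ 1) (x : ι → ℝ)
    (hx : ∀ i, x i ∈ Set.Icc 0 1) {u : ℝ} (hu : 1 ≤ u) :
    (Measure.pi fun _ : ι => (PMF.bernoulli p hp).toMeasure).real
        {b | u * (p * ∑ i, x i) ≤ ∑ i, if b i then x i else 0} ≤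
      exp (-((p * ∑ i, x i) * poissonRate u)) := by
  have hX : ∀ i, Measurable fun b : ι → Bool => if b i then x i else 0 := fun i =>
    (measurable_from_top (f := fun c : Bool => if c then x i else 0)).comp
      (measurable_pi_apply i)
  have hindep : iIndepFun (fun i (b : ι → Bool) => if b i then x i else 0)
      (Measure.pi fun _ : ι => (PMF.bernoulli p hp).toMeasure) :=
    iIndepFun_pi (X := fun i (c : Bool) => if c then x i else 0)
      fun _ => measurable_from_top.aemeasurable
  have h01 : ∀ i (b : ι → Bool), (if b i then x i else 0) ∈ Set.Icc 0 1 := fun i b => by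
    split_ifs
    exacts [hx i, ⟨le_rfl, zero_le_one⟩]
  have hmean : ∑ i, ∫ b, (if b i then x i else 0)
      ∂(Measure.pi fun _ : ι => (PMF.bernoulli p hp).toMeasure) = p * ∑ i, x i := by
    simp only [integral_pi_bernoulli_ite, mul_sum]
  rw [← hmean]
  exact measure_sum_ge_le_exp_neg_mul_poissonRate hindep hX h01 hu

end BernoulliProduct

theorem measureReal_pi_bernoulli_tail_le_of_flat {m n : ℕ} (hm : 0 < m) (hmn : m ≤ n)
    (hp : (m : NNReal) / n ≤ 1) {a : Fin n → ℝ} (ha : ∀ i, 0 ≤ a i) (hsum : ∑ i, a i = 1)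
    {R : ℝ} (hflat : ∀ i, n * a i ≤ R) {t : ℝ} (hRt : R ≤ t) :
    (Measure.pi fun _ : Fin n => (PMF.bernoulli ((m : NNReal) / n) hp).toMeasure).real
        {b | 1 + t ≤ n / m * ∑ i, if b i then a i else 0} ≤
      exp (-(m * poissonRate (t / R))) := by
  have hm0 : (0 : ℝ) < m := by exact_mod_cast hm
  have hn0 : (0 : ℝ) < n := by exact_mod_cast hm.trans_le hmn
  have hR1 : 1 ≤ R := calc
    1 = ∑ i, a i := hsum.symm
    _ ≤ ∑ _i : Fin n, R / n := sum_le_sum fun i _ => by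
      rw [le_div_iff₀ hn0, mul_comm]; exact hflat i
    _ = R := by rw [sum_const, card_univ, Fintype.card_fin, nsmul_eq_mul, mul_div_cancel₀ _ hn0.ne']
  have hR0 : 0 < R := by linarith
  set x : Fin n → ℝ := fun i => n / R * a i
  have hx01 : ∀ i, x i ∈ Set.Icc 0 1 := fun i =>
    ⟨mul_nonneg (div_nonneg hn0.le hR0.le) (ha i), by
      show n / R * a i ≤ 1
      rw [div_mul_eq_mul_div, div_le_one hR0]; exact hflat i⟩
  have hmean : ((m : NNReal) / n : NNReal) * ∑ i, x i = m / R := by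
    rw [← mul_sum, hsum]
    push_cast
    field_simp
  have hsubset : {b : Fin n → Bool | 1 + t ≤ n / m * ∑ i, if b i then a i else 0} ⊆
      {b | (1 + t) * (((m : NNReal) / n : NNReal) * ∑ i, x i) ≤
        ∑ i, if b i then x i else 0} := by
    intro b hb
    have hrescale : ∑ i, (if b i then x i else 0) =
        m / R * (n / m * ∑ i, if b i then a i else 0) := by
      rw [mul_sum, mul_sum]
      refine sum_congr rfl fun i _ => ?_
      split_ifs
      · simp only [x]
        field_simp
      · simp
    rw [Set.mem_setOf_eq, hmean, hrescale, mul_comm (1 + t)]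
    exact mul_le_mul_of_nonneg_left hb (by positivity)
  calc _ ≤ _ := measureReal_mono hsubset
    _ ≤ exp (-((((m : NNReal) / n : NNReal) * ∑ i, x i) * poissonRate (1 + t))) :=
        measureReal_pi_bernoulli_sum_ite_ge_le hp x hx01 (by linarith)
    _ ≤ exp (-(m * poissonRate (t / R))) := by
        rw [hmean, exp_le_exp, neg_le_neg_iff, div_mul_eq_mul_div, le_div_iff₀ hR0, mul_assoc]
        exact mul_le_mul_of_nonneg_left
          (by rw [mul_comm]; exact mul_poissonRate_div_le_poissonRate_one_add hR1 hRt) hm0.le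

lemma star_dotProduct_self_eq_sum_norm_sq {𝕜 ι : Type*} [RCLike 𝕜] [Fintype ι] (v : ι → 𝕜) :
    star v ⬝ᵥ v = ((∑ i, ‖v i‖ ^ 2 : ℝ) : 𝕜) := by
  simp [dotProduct, RCLike.conj_mul]

lemma sum_norm_sq_mulVec_of_conjTranspose_mul_self_eq_one {𝕜 κ ι : Type*} [RCLike 𝕜]
    [Fintype κ] [Fintype ι] [DecidableEq ι] {U : Matrix κ ι 𝕜} (hU : Uᴴ * U = 1) (ξ : ι → 𝕜) :
    ∑ k, ‖(U *ᵥ ξ) k‖ ^ 2 = ∑ i, ‖ξ i‖ ^ 2 := by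
  have h : star (U *ᵥ ξ) ⬝ᵥ (U *ᵥ ξ) = star ξ ⬝ᵥ ξ := by
    rw [Matrix.star_mulVec, Matrix.dotProduct_mulVec, Matrix.vecMul_vecMul, hU,
      Matrix.vecMul_one]
  rw [star_dotProduct_self_eq_sum_norm_sq, star_dotProduct_self_eq_sum_norm_sq] at h
  exact_mod_cast h

lemma l2C_sq {n : ℕ} (x : Fin n → ℂ) : l2C x ^ 2 = ∑ i, ‖x i‖ ^ 2 :=
  sq_sqrt (sum_nonneg fun _ _ => sq_nonneg _)

lemma norm_le_linfC {n : ℕ} (x : Fin n → ℂ) (i : Fin n) : ‖x i‖ ≤ linfC x :=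
  le_ciSup (f := fun j => ‖x j‖) (Set.finite_range _).bddAbove i

lemma l2C_subIso_mulVec_sq {n : ℕ} (m : ℕ) (U : Matrix (Fin n) (Fin n) ℂ) (θ : Fin n → Bool)
    (ξ : Fin n → ℂ) :
    l2C (subIso m U θ *ᵥ ξ) ^ 2 = n / m * ∑ i, if θ i then ‖(U *ᵥ ξ) i‖ ^ 2 else 0 := by
  rw [l2C_sq, mul_sum]
  refine sum_congr rfl fun i _ => ?_
  rw [subIso, Matrix.smul_mulVec, ← Matrix.mulVec_mulVec, Pi.smul_apply,
    Matrix.mulVec_diagonal]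
  split_ifs
  · simp [mul_pow, div_pow]
  · simp

/-- `flattish vector' concentration.  For a unit vector `ξ ∈ ℂ^n`,
with `R := n·‖Uξ‖_∞²`, and any `max(1,R) < t < n/m`,
`ℙ{ |‖A_θ ξ‖₂² − 1| ≥ t } ≤ exp(−m·((t/R)·log(t/R) − t/R + 1))`. -/
theorem flattish_vector_concentration (m n : ℕ) (hm : 2 ≤ m) (hmn : m ≤ n)
    (U : Matrix (Fin n) (Fin n) ℂ) (hU : Uᴴ * U = 1)
    (Ω : Type) [MeasurableSpace Ω] (μ : Measure Ω) [IsProbabilityMeasure μ]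
    (θ : Ω → Fin n → Bool) (hθmeas : Measurable θ)
    (hθ : Measure.map θ μ = Measure.pi (fun _ : Fin n =>
      (PMF.bernoulli ((m : NNReal) / n)
        (div_le_one_of_le₀ (by exact_mod_cast hmn) (by positivity))).toMeasure))
    (ξ : Fin n → ℂ) (hξ : l2C ξ = 1)
    (R : ℝ) (hR : R = n * linfC (U.mulVec ξ) ^ 2)
    (t : ℝ) (ht1 : max 1 R < t) :
    μ {ω | t ≤ |l2C ((subIso m U (θ ω)).mulVec ξ) ^ 2 - 1|} ≤
      ENNReal.ofReal (Real.exp (-((m : ℝ) * (t / R * Real.log (t / R) - t / R + 1)))) := by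
  set a : Fin n → ℝ := fun i => ‖(U *ᵥ ξ) i‖ ^ 2
  have hsum : ∑ i, a i = 1 := by
    rw [sum_norm_sq_mulVec_of_conjTranspose_mul_self_eq_one hU, ← l2C_sq, hξ, one_pow]
  have hflat : ∀ i, n * a i ≤ R := fun i => hR ▸
    mul_le_mul_of_nonneg_left (pow_le_pow_left₀ (norm_nonneg _) (norm_le_linfC _ i) 2)
      n.cast_nonneg
  set E := {b : Fin n → Bool | 1 + t ≤ n / m * ∑ i, if b i then a i else 0}
  have hevent : {ω | t ≤ |l2C ((subIso m U (θ ω)).mulVec ξ) ^ 2 - 1|} ⊆ θ ⁻¹' E := by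
    intro ω hω
    rw [Set.mem_setOf_eq, l2C_subIso_mulVec_sq] at hω
    have hnonneg : 0 ≤ (n : ℝ) / m * ∑ i, if θ ω i then a i else 0 := by positivity
    rcases le_abs'.mp hω with hlow | hhigh
    · linarith [le_max_left 1 R]
    · exact le_sub_iff_add_le'.mp hhigh
  calc μ _ ≤ μ (θ ⁻¹' E) := measure_mono hevent
    _ = Measure.map θ μ E := (Measure.map_apply hθmeas (Set.toFinite E).measurableSet).symm
    _ ≤ _ := by
        rw [hθ, ← ofReal_measureReal]
        exact ENNReal.ofReal_le_ofReal (measureReal_pi_bernoulli_tail_le_of_flat (by omega) hmn _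
          (fun _ => sq_nonneg _) hsum hflat (le_max_right 1 R |>.trans ht1.le))
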